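/- There is a constant c > 0 such that for every ε with 0 < ε ≤ 1 for which m := ⌊ε^{-1}/2⌋ ≥ 2, the following holds. Let S₀ ⊆ ℝ² consist of the 2m points {(i/(m−1), 0) : i = 0, 1, …, m−1} ∪ {(i/(m−1), 1) : i = 0, 1, …, m−1} (m equally spaced points on each of two opposite sides of the unit square). Then every Euclidean (1+ε)-spanner for S₀ has weight at least c · ε^{-2}. -/

import Mathlib

/-!
A path of the spanner from the `i`-th bottom point `(xᵢ, 0)` to the `j`-th top point `(xⱼ, 1)`
has to use an edge from some bottom point `(a, 0)` to some top point `(b, 1)`. As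
`t ↦ √(1 + t²)` is `3/4`-Lipschitz on `[-1, 1]`, the horizontal detour `|xᵢ - a| + |xⱼ - b|`
costs more than it can save on the crossing unless it is at most `6ε`. The grid spacing is at
least `2ε`, so one crossing edge serves at most `7²` of the `m²` pairs `(i, j)`; every crossing
edge has length at least `1`, and `m² ≥ ε⁻² / 9`.
-/

/-- The point of the Euclidean plane with coordinates `(a, b)`. -/
noncomputable def pt (a b : ℝ) : EuclideanSpace ℝ (Fin 2) :=
  (WithLp.equiv 2 (Fin 2 → ℝ)).symm ![a, b]

/-- The weight of an unordered pair of points: the distance between its endpoints. -/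
noncomputable def edgeWeight (e : Sym2 (EuclideanSpace ℝ (Fin 2))) : ℝ :=
  Sym2.lift ⟨fun a b => dist a b, fun _ _ => dist_comm _ _⟩ e

/-- `G = (S, E)` is a Euclidean `(1+ε)`-spanner for `S`. -/
def IsSpanner (S : Set (EuclideanSpace ℝ (Fin 2)))
    (E : Finset (Sym2 (EuclideanSpace ℝ (Fin 2)))) (ε : ℝ) : Prop :=
  (∀ e ∈ E, ¬ e.IsDiag ∧ ∀ x ∈ e, x ∈ S) ∧
  ∀ p ∈ S, ∀ q ∈ S, ∃ (m : ℕ) (x : Fin (m + 1) → EuclideanSpace ℝ (Fin 2)),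
    x 0 = p ∧ x (Fin.last m) = q ∧ (∀ i, x i ∈ S) ∧
    (∀ i : Fin m, s(x i.castSucc, x i.succ) ∈ E) ∧
    ∑ i : Fin m, dist (x i.castSucc) (x i.succ) ≤ (1 + ε) * dist p q

/-- `m` equally spaced points on each of two opposite sides of the unit square. -/
noncomputable def twoSides (m : ℕ) : Set (EuclideanSpace ℝ (Fin 2)) :=
  {x | ∃ i : ℕ, i < m ∧
    (x = pt ((i : ℝ) / ((m : ℝ) - 1)) 0 ∨ x = pt ((i : ℝ) / ((m : ℝ) - 1)) 1)}

open Finset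

local notation "ℝ²" => EuclideanSpace ℝ (Fin 2)

@[simp] lemma pt_apply_zero (a b : ℝ) : pt a b 0 = a := rfl

@[simp] lemma pt_apply_one (a b : ℝ) : pt a b 1 = b := rfl

lemma pt_coord (z : ℝ²) : pt (z 0) (z 1) = z := by
  ext i; fin_cases i <;> rfl

lemma pt_inj {a b c d : ℝ} : pt a b = pt c d ↔ a = c ∧ b = d := by
  refine ⟨fun h => ⟨?_, ?_⟩, fun ⟨hac, hbd⟩ => hac ▸ hbd ▸ rfl⟩
  · simpa using congrArg (· 0) h
  · simpa using congrArg (· 1) h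

lemma dist_eq_sqrt_coord (z w : ℝ²) : dist z w = √((z 0 - w 0) ^ 2 + (z 1 - w 1) ^ 2) := by
  simp [EuclideanSpace.dist_eq, Fin.sum_univ_two, Real.dist_eq, sq_abs]

lemma dist_eq_abs_of_coord_one_eq {z w : ℝ²} (h : z 1 = w 1) : dist z w = |z 0 - w 0| := by
  simp [dist_eq_sqrt_coord, h, Real.sqrt_sq_eq_abs]

lemma dist_eq_sqrt_of_coord_one {z w : ℝ²} (hz : z 1 = 0) (hw : w 1 = 1) :
    dist z w = √(1 + (z 0 - w 0) ^ 2) := by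
  rw [dist_eq_sqrt_coord, hz, hw]; ring_nf

lemma edgeWeight_nonneg (e : Sym2 ℝ²) : 0 ≤ edgeWeight e :=
  e.ind fun a b => (dist_nonneg : 0 ≤ dist a b)

lemma sqrt_one_add_sq_sub_sqrt_one_add_sq_le {d s : ℝ} (hd : |d| ≤ 1) (hs : |s| ≤ 1) :
    √(1 + d ^ 2) - √(1 + s ^ 2) ≤ 3 / 4 * |d - s| := by
  have key : ∀ x : ℝ, |x| ≤ 1 → |x| ≤ 3 / 4 * √(1 + x ^ 2) := fun x hx => by
    rw [← div_le_iff₀' (by norm_num), Real.le_sqrt (by positivity) (by positivity)]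
    nlinarith [sq_abs x, abs_nonneg x]
  have hprod : (√(1 + d ^ 2) - √(1 + s ^ 2)) * (√(1 + d ^ 2) + √(1 + s ^ 2))
      ≤ 3 / 4 * |d - s| * (√(1 + d ^ 2) + √(1 + s ^ 2)) :=
    calc (√(1 + d ^ 2) - √(1 + s ^ 2)) * (√(1 + d ^ 2) + √(1 + s ^ 2))
        = √(1 + d ^ 2) ^ 2 - √(1 + s ^ 2) ^ 2 := by ring
      _ = (d - s) * (d + s) := by
          rw [Real.sq_sqrt (by positivity), Real.sq_sqrt (by positivity)]; ring
      _ ≤ |(d - s) * (d + s)| := le_abs_self _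
      _ ≤ |d - s| * (|d| + |s|) := by rw [abs_mul]; gcongr; exact abs_add_le d s
      _ ≤ 3 / 4 * |d - s| * (√(1 + d ^ 2) + √(1 + s ^ 2)) := by
          nlinarith [key d hd, key s hs, abs_nonneg (d - s)]
  exact le_of_mul_le_mul_right hprod (by positivity)

lemma le_six_mul_of_detour {ε d s t : ℝ} (hε : 0 ≤ ε) (hd : |d| ≤ 1) (hs : |s| ≤ 1)
    (hds : |d - s| ≤ t) (h : t + √(1 + s ^ 2) ≤ (1 + ε) * √(1 + d ^ 2)) : t ≤ 6 * ε := by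
  have hD : √(1 + d ^ 2) ≤ 3 / 2 := by
    rw [Real.sqrt_le_left (by norm_num)]; nlinarith [sq_abs d, abs_nonneg d]
  nlinarith [sqrt_one_add_sq_sub_sqrt_one_add_sq_le hd hs]

lemma Fin.exists_not_castSucc_and_succ {k : ℕ} (P : Fin (k + 1) → Prop) (h0 : ¬ P 0)
    (hk : P (Fin.last k)) : ∃ i : Fin k, ¬ P i.castSucc ∧ P i.succ := by
  induction k with
  | zero => exact absurd hk h0
  | succ k ih =>
    by_cases h : P (Fin.last k).castSucc
    · obtain ⟨i, hi⟩ := ih (P ∘ Fin.castSucc) h0 h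
      exact ⟨i.castSucc, hi⟩
    · exact ⟨Fin.last k, h, Fin.succ_last k ▸ hk⟩

section Paths

variable {α : Type*} [PseudoMetricSpace α]

lemma dist_add_dist_add_dist_le_sum_range (y : ℕ → α) {n k : ℕ} (h : n < k) :
    dist (y 0) (y n) + dist (y n) (y (n + 1)) + dist (y (n + 1)) (y k)
      ≤ ∑ i ∈ range k, dist (y i) (y (i + 1)) := by
  rw [← sum_range_add_sum_Ico _ h, sum_range_succ]
  gcongr
  · exact dist_le_range_sum_dist y n
  · exact dist_le_Ico_sum_dist y h

lemma dist_add_dist_add_dist_le_sum_fin {k : ℕ} (x : Fin (k + 1) → α) (t : Fin k) :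
    dist (x 0) (x t.castSucc) + dist (x t.castSucc) (x t.succ) + dist (x t.succ) (x (Fin.last k))
      ≤ ∑ i : Fin k, dist (x i.castSucc) (x i.succ) := by
  have := dist_add_dist_add_dist_le_sum_range (fun n => x (Fin.clamp n k)) t.isLt
  rw [← Fin.sum_univ_eq_sum_range] at this
  convert this using 4 <;> congr 1 <;> ext <;> simp [Fin.clamp, t.isLt.le, t.isLt]

end Paths

theorem IsSpanner.exists_crossing_edge {S : Set ℝ²} {E : Finset (Sym2 ℝ²)} {ε : ℝ}
    (hS : ∀ z ∈ S, z 0 ∈ Set.Icc 0 1 ∧ (z 1 = 0 ∨ z 1 = 1)) (hε : 0 ≤ ε)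
    (hE : IsSpanner S E ε) {p q : ℝ²} (hp : p ∈ S) (hq : q ∈ S) (hp1 : p 1 = 0)
    (hq1 : q 1 = 1) :
    ∃ u ∈ S, ∃ v ∈ S, u 1 = 0 ∧ v 1 = 1 ∧ s(u, v) ∈ E ∧ |p 0 - u 0| + |q 0 - v 0| ≤ 6 * ε := by
  obtain ⟨k, x, hx0, hxk, hxS, hxE, hlen⟩ := hE.2 p hp q hq
  obtain ⟨t, ht0, ht1⟩ := Fin.exists_not_castSucc_and_succ (fun i => x i 1 = 1)
    (by simp [hx0, hp1]) (by simp [hxk, hq1])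
  have hu1 : x t.castSucc 1 = 0 := (hS _ (hxS _)).2.resolve_right ht0
  refine ⟨_, hxS _, _, hxS _, hu1, ht1, hxE t, ?_⟩
  have hunit : ∀ z ∈ S, ∀ w ∈ S, |z 0 - w 0| ≤ 1 := fun z hz w hw => by
    obtain ⟨⟨hz0, hz1⟩, -⟩ := hS z hz
    obtain ⟨⟨hw0, hw1⟩, -⟩ := hS w hw
    rw [abs_le]; constructor <;> linarith
  refine le_six_mul_of_detour hε (hunit p hp q hq)
    (hunit _ (hxS t.castSucc) _ (hxS t.succ)) ?_ ?_
  · calc |p 0 - q 0 - (x t.castSucc 0 - x t.succ 0)|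
          = |(p 0 - x t.castSucc 0) - (q 0 - x t.succ 0)| := by ring_nf
      _ ≤ _ := abs_sub _ _
  · have hpath := dist_add_dist_add_dist_le_sum_fin x t
    rw [hx0, hxk, dist_eq_abs_of_coord_one_eq (hp1.trans hu1.symm),
      dist_eq_sqrt_of_coord_one hu1 ht1, dist_eq_abs_of_coord_one_eq (ht1.trans hq1.symm),
      abs_sub_comm (x t.succ 0)] at hpath
    rw [← dist_eq_sqrt_of_coord_one hp1 hq1]
    linarith

lemma card_le_card_mul_of_forall_exists_near (s t : Finset (ℕ × ℕ)) (r : ℕ)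
    (h : ∀ p ∈ s, ∃ q ∈ t, |(p.1 : ℤ) - q.1| ≤ r ∧ |(p.2 : ℤ) - q.2| ≤ r) :
    #s ≤ #t * (2 * r + 1) ^ 2 :=
  calc #s ≤ #(t.biUnion fun q => Icc (q.1 - r) (q.1 + r) ×ˢ Icc (q.2 - r) (q.2 + r)) := by
        refine card_le_card fun p hp => ?_
        obtain ⟨q, hq, h1, h2⟩ := h p hp
        rw [abs_le] at h1 h2
        simp only [mem_biUnion, mem_product, mem_Icc]
        exact ⟨q, hq, by omega⟩
    _ ≤ #t * (2 * r + 1) ^ 2 := by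
        refine card_biUnion_le_card_mul _ _ _ fun q _ => ?_
        rw [card_product, Nat.card_Icc, Nat.card_Icc, sq]
        gcongr <;> omega

lemma div_sub_one_mem_Icc {i m : ℕ} (hi : i < m) : (i : ℝ) / (m - 1) ∈ Set.Icc 0 1 := by
  have : (i : ℝ) + 1 ≤ m := by exact_mod_cast hi
  exact ⟨div_nonneg (Nat.cast_nonneg _) (by linarith),
    div_le_one_of_le₀ (by linarith) (by linarith)⟩

lemma coord_of_mem_twoSides {m : ℕ} {z : ℝ²} (hz : z ∈ twoSides m) :
    (∃ i < m, z 0 = i / (m - 1)) ∧ (z 1 = 0 ∨ z 1 = 1) := by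
  obtain ⟨i, hi, rfl | rfl⟩ := hz <;> exact ⟨⟨i, hi, rfl⟩, by simp⟩

noncomputable def crossEdge (m : ℕ) (q : ℕ × ℕ) : Sym2 ℝ² :=
  s(pt (q.1 / (m - 1 : ℝ)) 0, pt (q.2 / (m - 1 : ℝ)) 1)

lemma crossEdge_injective {m : ℕ} (hm : m ≠ 1) : Function.Injective (crossEdge m) := by
  have hm1 : (m : ℝ) - 1 ≠ 0 := sub_ne_zero.2 (by exact_mod_cast hm)
  intro q q' h
  simpa [crossEdge, Sym2.eq_iff, pt_inj, div_left_inj' hm1, Prod.ext_iff] using h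

lemma one_le_edgeWeight_crossEdge (m : ℕ) (q : ℕ × ℕ) : 1 ≤ edgeWeight (crossEdge m q) := by
  change 1 ≤ dist (pt _ 0) (pt _ 1)
  rw [dist_eq_sqrt_of_coord_one rfl rfl]
  exact Real.one_le_sqrt.2 (by nlinarith)

lemma card_le_sum_edgeWeight {m : ℕ} (hm : m ≠ 1) {E : Finset (Sym2 ℝ²)} {T : Finset (ℕ × ℕ)}
    (hT : ∀ q ∈ T, crossEdge m q ∈ E) : (#T : ℝ) ≤ ∑ e ∈ E, edgeWeight e :=
  calc (#T : ℝ) ≤ ∑ q ∈ T, edgeWeight (crossEdge m q) := by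
        simpa using card_nsmul_le_sum T _ 1 fun q _ => one_le_edgeWeight_crossEdge m q
    _ = ∑ e ∈ T.image (crossEdge m), edgeWeight e :=
        (sum_image fun _ _ _ _ h => crossEdge_injective hm h).symm
    _ ≤ ∑ e ∈ E, edgeWeight e :=
        sum_le_sum_of_subset_of_nonneg (image_subset_iff.2 hT) fun e _ _ => edgeWeight_nonneg e

theorem IsSpanner.exists_crossEdge_near {m : ℕ} {E : Finset (Sym2 ℝ²)} {ε : ℝ} (hε : 0 ≤ ε)
    (hm : 1 < m) (hspacing : 2 * ε * (m - 1) ≤ 1) (hE : IsSpanner (twoSides m) E ε) {i j : ℕ}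
    (hi : i < m) (hj : j < m) :
    ∃ q ∈ range m ×ˢ range m, crossEdge m q ∈ E ∧ |(i : ℤ) - q.1| ≤ 3 ∧ |(j : ℤ) - q.2| ≤ 3 := by
  have hS : ∀ z ∈ twoSides m, z 0 ∈ Set.Icc 0 1 ∧ (z 1 = 0 ∨ z 1 = 1) := fun z hz => by
    obtain ⟨⟨k, hk, h0⟩, h1⟩ := coord_of_mem_twoSides hz
    exact ⟨h0 ▸ div_sub_one_mem_Icc hk, h1⟩
  obtain ⟨u, hu, v, hv, hu1, hv1, huv, hnear⟩ :=
    hE.exists_crossing_edge hS hε ⟨i, hi, Or.inl rfl⟩ ⟨j, hj, Or.inr rfl⟩ rfl rfl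
  obtain ⟨⟨i', hi', hu0⟩, -⟩ := coord_of_mem_twoSides hu
  obtain ⟨⟨j', hj', hv0⟩, -⟩ := coord_of_mem_twoSides hv
  have hcross : crossEdge m (i', j') = s(u, v) := by
    rw [crossEdge, ← hu0, ← hu1, ← hv0, ← hv1, pt_coord, pt_coord]
  have hm1 : (0 : ℝ) < m - 1 := by
    have : (1 : ℝ) < m := by exact_mod_cast hm
    linarith
  have hindex : ∀ a b : ℕ, |(a : ℝ) / (m - 1) - b / (m - 1)| ≤ 6 * ε → |(a : ℤ) - b| ≤ 3 := by
    intro a b h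
    rw [← sub_div, abs_div, abs_of_pos hm1, div_le_iff₀ hm1] at h
    have : |(a : ℝ) - b| ≤ 3 := by nlinarith
    exact_mod_cast this
  simp only [pt_apply_zero, hu0, hv0] at hnear
  refine ⟨(i', j'), by simp [hi', hj'], hcross ▸ huv, hindex _ _ ?_, hindex _ _ ?_⟩ <;>
    linarith [abs_nonneg ((i : ℝ) / (m - 1) - i' / (m - 1)),
      abs_nonneg ((j : ℝ) / (m - 1) - j' / (m - 1))]

/-- Every Euclidean `(1+ε)`-spanner for `m = ⌊ε⁻¹/2⌋` equally spaced points on each of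
two opposite sides of the unit square has weight at least `c · ε^{-2}`. -/
theorem spanner_lower_bound_two_sides :
    ∃ c : ℝ, 0 < c ∧ ∀ ε : ℝ, 0 < ε → ε ≤ 1 → 2 ≤ ⌊ε⁻¹ / 2⌋₊ →
      ∀ E : Finset (Sym2 (EuclideanSpace ℝ (Fin 2))),
        IsSpanner (twoSides ⌊ε⁻¹ / 2⌋₊) E ε →
        c * ε ^ (-(2 : ℝ)) ≤ ∑ e ∈ E, edgeWeight e := by
  refine ⟨1 / 441, by norm_num, fun ε hε _ hm E hE => ?_⟩
  set m := ⌊ε⁻¹ / 2⌋₊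
  have hm_le : (m : ℝ) ≤ ε⁻¹ / 2 := Nat.floor_le (by positivity)
  have hm_lt : ε⁻¹ / 2 < m + 1 := Nat.lt_floor_add_one _
  have hm2 : (2 : ℝ) ≤ m := by exact_mod_cast hm
  have hspacing : 2 * ε * (m - 1) ≤ 1 := by
    nlinarith [mul_inv_cancel₀ hε.ne']
  set T := (range m ×ˢ range m).filter fun q => crossEdge m q ∈ E
  have hcount : #(range m ×ˢ range m) ≤ #T * (2 * 3 + 1) ^ 2 :=
    card_le_card_mul_of_forall_exists_near _ T 3 fun p hp => by
      obtain ⟨hp1, hp2⟩ := mem_product.1 hp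
      obtain ⟨q, hq, hqE, hnear⟩ :=
        hE.exists_crossEdge_near hε.le hm hspacing (mem_range.1 hp1) (mem_range.1 hp2)
      exact ⟨q, mem_filter.2 ⟨hq, hqE⟩, hnear⟩
  have hweight : (#T : ℝ) ≤ ∑ e ∈ E, edgeWeight e :=
    card_le_sum_edgeWeight (by omega) fun q hq => (mem_filter.1 hq).2
  rw [card_product, card_range] at hcount
  have hcount' : (m : ℝ) * m ≤ #T * 49 := by exact_mod_cast hcount
  have hinv : ε⁻¹ ≤ 3 * m := by linarith
  rw [Real.rpow_neg hε.le, Real.rpow_two, ← inv_pow]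
  calc 1 / 441 * ε⁻¹ ^ 2 ≤ 1 / 441 * (3 * m : ℝ) ^ 2 := by gcongr
    _ ≤ (#T : ℝ) := by linarith
    _ ≤ ∑ e ∈ E, edgeWeight e := hweight
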